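/- In the Golub–Kahan bidiagonalization setup, fix k with 1 ≤ k ≤ n−1 and let (θ̃_1^{(k)})² > ⋯ > (θ̃_k^{(k)})² be the singular values of the (k+1)×k matrix M_k obtained by stacking the row α_{k+1}β_{k+1}(e_k^{(k)})ᵀ below B_kᵀB_k, where e_k^{(k)} is the last standard basis vector of ℝ^k, and let θ_1^{(k)} > ⋯ > θ_k^{(k)} be the singular values of B_k. Then for every i with 1 ≤ i ≤ k one has (θ̃_i^{(k)})² < (θ_i^{(k)})² + γ_k^{lsqr} γ_{k−1}^{lsqr}. -/

import Mathlib

/-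
Write `M_k = J (B_kᵀ B_k) + c E`, where `J` embeds `ℝ^k` isometrically into `ℝ^{k+1}` as the
first `k` coordinates, `E` is the matrix unit at the corner `(k+1, k)` and
`c = α_{k+1} β_{k+1}`. With singular values given by the Eckart–Young characterisation, Weyl's
bound `σ_i(X + Y) ≤ σ_i(X) + ‖Y‖` and `σ_i(J X) ≤ σ_i(X)` give
`σ_i(M_k) ≤ σ_i(B_kᵀ B_k) + |c|`. The spectral theorem for `B_kᵀ B_k`, with eigenvalues
`μ_1 ≥ ⋯ ≥ μ_k`, gives `σ_i(B_kᵀ B_k) ≤ μ_i ≤ σ_i(B_k)²`: truncating the eigen-expansion after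
`i - 1` terms leaves an error of norm `μ_i`, and the span of the top `i` eigenvectors, on which
`‖B_k x‖² ≥ μ_i ‖x‖²`, meets the kernel of every matrix of rank `< i`.
Finally `γ_k ≥ ‖A Q e_{k+1}‖ = ‖B e_{k+1}‖ = √(α_{k+1}² + β_{k+2}²) > α_{k+1}` and likewise
`γ_{k-1} ≥ β_{k+1}`, so `|c| < γ_k γ_{k-1}`.
-/
open Matrix

/-- Spectral norm (largest singular value) of a real matrix. -/
noncomputable def specNorm {a b : ℕ} (M : Matrix (Fin a) (Fin b) ℝ) : ℝ :=
  ‖LinearMap.toContinuousLinearMap (Matrix.toEuclideanLin M)‖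

/-- The `j`-th largest singular value of a real matrix (`j ≥ 1`), characterized via the
Eckart–Young theorem as the minimal spectral-norm distance to matrices of rank `< j`;
it is `0` when `j` exceeds the smaller dimension. -/
noncomputable def singVal {a b : ℕ} (M : Matrix (Fin a) (Fin b) ℝ) (j : ℕ) : ℝ :=
  sInf {r : ℝ | ∃ D : Matrix (Fin a) (Fin b) ℝ, D.rank < j ∧ r = specNorm (M - D)}

/-- The matrix of the first `k` columns of `M`. -/
def colSub {a b : ℕ} (M : Matrix (Fin a) (Fin b) ℝ) (k : ℕ) (hk : k ≤ b) :
    Matrix (Fin a) (Fin k) ℝ :=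
  M.submatrix id fun j => ⟨j.1, lt_of_lt_of_le j.2 hk⟩

/-- The leading `r × c` submatrix of `M`. -/
def subUL {a b : ℕ} (M : Matrix (Fin a) (Fin b) ℝ) (r c : ℕ) (hr : r ≤ a) (hc : c ≤ b) :
    Matrix (Fin r) (Fin c) ℝ :=
  M.submatrix (fun i => ⟨i.1, lt_of_lt_of_le i.2 hr⟩) (fun j => ⟨j.1, lt_of_lt_of_le j.2 hc⟩)

open Module
-- In this scope `‖M‖` is the `ℓ²` operator norm of a matrix, which is `specNorm M` by definition.
open scoped Matrix.Norms.L2Operator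

section Norm

variable {l m n : Type*} [Fintype l] [Fintype m] [Fintype n] [DecidableEq l] [DecidableEq n]

lemma Matrix.l2_opNorm_mul_of_transpose_mul_self {J : Matrix m n ℝ} (hJ : Jᵀ * J = 1)
    (X : Matrix n l ℝ) : ‖J * X‖ = ‖X‖ := by
  have h := l2_opNorm_conjTranspose_mul_self (J * X)
  rw [conjTranspose_eq_transpose_of_trivial, transpose_mul, Matrix.mul_assoc,
    ← Matrix.mul_assoc Jᵀ, hJ, Matrix.one_mul, ← conjTranspose_eq_transpose_of_trivial,
    l2_opNorm_conjTranspose_mul_self] at h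
  nlinarith [norm_nonneg (J * X), norm_nonneg X]

lemma Matrix.l2_opNorm_one_le : ‖(1 : Matrix n n ℝ)‖ ≤ 1 := by
  rw [← diagonal_one, l2_opNorm_diagonal]
  exact pi_norm_le_iff_of_nonneg zero_le_one |>.mpr fun _ => by simp

lemma Matrix.l2_opNorm_le_one_of_transpose_mul_self {J : Matrix m n ℝ} (hJ : Jᵀ * J = 1) :
    ‖J‖ ≤ 1 := by
  have h := l2_opNorm_mul_of_transpose_mul_self hJ (1 : Matrix n n ℝ)
  rw [Matrix.mul_one] at h
  exact h ▸ l2_opNorm_one_le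

lemma Matrix.l2_opNorm_single [DecidableEq m] (i : m) (j : n) (c : ℝ) :
    ‖single i j c‖ = |c| := by
  have h := l2_opNorm_conjTranspose_mul_self (single i j c)
  rw [conjTranspose_eq_transpose_of_trivial, transpose_single, single_mul_single_same,
    ← diagonal_single, l2_opNorm_diagonal, Pi.norm_single, norm_mul, Real.norm_eq_abs] at h
  nlinarith [norm_nonneg (single i j c), abs_nonneg c]

lemma Matrix.l2_opNorm_toEuclideanLin_apply_le (M : Matrix m n ℝ) (x : EuclideanSpace ℝ n) :
    ‖toEuclideanLin M x‖ ≤ ‖M‖ * ‖x‖ :=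
  l2_opNorm_mulVec M x

lemma Matrix.sum_sq_apply_le_l2_opNorm_sq (X : Matrix m n ℝ) (j : n) :
    ∑ i, X i j ^ 2 ≤ ‖X‖ ^ 2 := by
  have h := X.l2_opNorm_toEuclideanLin_apply_le (EuclideanSpace.single j 1)
  rw [PiLp.norm_single, norm_one, mul_one] at h
  calc ∑ i, X i j ^ 2 = ‖toEuclideanLin X (EuclideanSpace.single j 1)‖ ^ 2 := by
        simp [EuclideanSpace.norm_sq_eq]
    _ ≤ ‖X‖ ^ 2 := by gcongr

lemma Matrix.rank_eq_finrank_range_toEuclideanLin (D : Matrix m n ℝ) :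
    D.rank = finrank ℝ (LinearMap.range (toEuclideanLin D)) :=
  D.rank_eq_finrank_range_toLin (EuclideanSpace.basisFun m ℝ).toBasis
    (EuclideanSpace.basisFun n ℝ).toBasis

lemma Matrix.inner_toEuclideanLin_transpose_mul_self [DecidableEq m] (B : Matrix m n ℝ)
    (x : EuclideanSpace ℝ n) :
    inner ℝ (toEuclideanLin (Bᵀ * B) x) x = ‖toEuclideanLin B x‖ ^ 2 := by
  rw [toLpLin_mul_same, ← conjTranspose_eq_transpose_of_trivial,
    toEuclideanLin_conjTranspose_eq_adjoint, LinearMap.comp_apply, LinearMap.adjoint_inner_left,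
    real_inner_self_eq_norm_sq]

end Norm

lemma Matrix.sum_sq_mul_apply_of_transpose_mul_self {l m n : Type*} [Fintype l] [Fintype m]
    [DecidableEq m] {J : Matrix l m ℝ} (hJ : Jᵀ * J = 1) (X : Matrix m n ℝ) (j : n) :
    ∑ i, (J * X) i j ^ 2 = ∑ i, X i j ^ 2 :=
  calc ∑ i, (J * X) i j ^ 2 = ((J * X)ᵀ * (J * X)) j j := by
        simp only [mul_apply (M := (J * X)ᵀ), transpose_apply, sq]
    _ = (Xᵀ * X) j j := by
      rw [transpose_mul, Matrix.mul_assoc, ← Matrix.mul_assoc Jᵀ, hJ, Matrix.one_mul]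
    _ = ∑ i, X i j ^ 2 := by simp only [mul_apply, transpose_apply, sq]

lemma Matrix.transpose_mul_self_submatrix_one {R l m : Type*} [CommSemiring R] [Fintype m]
    [DecidableEq l] [DecidableEq m] {f : l → m} (hf : Function.Injective f) :
    ((1 : Matrix m m R).submatrix id f)ᵀ * (1 : Matrix m m R).submatrix id f = 1 := by
  rw [transpose_submatrix, transpose_one, ← submatrix_mul _ _ _ _ _ Function.bijective_id,
    Matrix.one_mul, submatrix_one f hf]

namespace LinearMap.IsSymmetric

variable {E : Type*} [NormedAddCommGroup E] [InnerProductSpace ℝ E] [FiniteDimensional ℝ E]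
  {n : ℕ} {T : E →ₗ[ℝ] E} (hT : T.IsSymmetric) (hn : finrank ℝ E = n)
include hT hn

lemma sq_norm_apply_eq_sum (x : E) :
    ‖T x‖ ^ 2 = ∑ i, (hT.eigenvalues hn i * (hT.eigenvectorBasis hn).repr x i) ^ 2 := by
  rw [← (hT.eigenvectorBasis hn).repr.norm_map, EuclideanSpace.norm_sq_eq]
  simp [hT.eigenvectorBasis_apply_self_apply hn, ← abs_mul, sq_abs]

lemma inner_apply_self_eq_sum (x : E) :
    inner ℝ (T x) x = ∑ i, hT.eigenvalues hn i * (hT.eigenvectorBasis hn).repr x i ^ 2 := by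
  rw [← (hT.eigenvectorBasis hn).repr.inner_map_map, PiLp.inner_apply]
  simp [hT.eigenvectorBasis_apply_self_apply hn, sq, mul_left_comm]

lemma norm_apply_le_of_mem_orthogonal {j : Fin n} (hμ : ∀ i, j ≤ i → 0 ≤ hT.eigenvalues hn i)
    {y : E}
    (hy : y ∈ (Submodule.span ℝ (Set.range (hT.eigenvectorBasis hn ∘ Fin.castLE j.2.le)))ᗮ) :
    ‖T y‖ ≤ hT.eigenvalues hn j * ‖y‖ := by
  have hc : ∀ i : Fin n, i < j → (hT.eigenvectorBasis hn).repr y i = 0 := fun i hi => by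
    rw [OrthonormalBasis.repr_apply_apply]
    exact Submodule.inner_right_of_mem_orthogonal
      (Submodule.subset_span (Set.mem_range.mpr ⟨⟨i, hi⟩, rfl⟩)) hy
  refine (sq_le_sq₀ (norm_nonneg _) (mul_nonneg (hμ j le_rfl) (norm_nonneg _))).mp ?_
  rw [hT.sq_norm_apply_eq_sum hn, mul_pow, ← (hT.eigenvectorBasis hn).repr.norm_map,
    EuclideanSpace.norm_sq_eq, Finset.mul_sum]
  refine Finset.sum_le_sum fun i _ => ?_
  rcases lt_or_ge i j with hij | hji
  · simp [hc i hij]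
  · have : hT.eigenvalues hn i ^ 2 ≤ hT.eigenvalues hn j ^ 2 :=
      pow_le_pow_left₀ (hμ i hji) (hT.eigenvalues_antitone hn hji) 2
    rw [mul_pow, Real.norm_eq_abs, sq_abs]
    exact mul_le_mul_of_nonneg_right this (sq_nonneg _)

lemma exists_finrank_range_le_norm_sub_apply_le (j : Fin n)
    (hμ : ∀ i, j ≤ i → 0 ≤ hT.eigenvalues hn i) :
    ∃ T' : E →ₗ[ℝ] E, finrank ℝ (LinearMap.range T') ≤ j ∧
      ∀ x, ‖T x - T' x‖ ≤ hT.eigenvalues hn j * ‖x‖ := by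
  set K := Submodule.span ℝ (Set.range (hT.eigenvectorBasis hn ∘ Fin.castLE j.2.le))
  refine ⟨T ∘ₗ K.starProjection.toLinearMap, ?_, fun x => ?_⟩
  · calc finrank ℝ (LinearMap.range (T ∘ₗ K.starProjection.toLinearMap))
        ≤ finrank ℝ K := by
          rw [LinearMap.range_comp, show LinearMap.range K.starProjection.toLinearMap = K from
            K.range_starProjection]
          exact Submodule.finrank_map_le T K
      _ ≤ j := (finrank_range_le_card _).trans_eq (Fintype.card_fin _)
  · rw [LinearMap.comp_apply, ContinuousLinearMap.coe_coe, ← map_sub]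
    calc ‖T (x - K.starProjection x)‖ ≤ hT.eigenvalues hn j * ‖x - K.starProjection x‖ :=
          hT.norm_apply_le_of_mem_orthogonal hn hμ (K.sub_starProjection_mem_orthogonal x)
      _ ≤ hT.eigenvalues hn j * ‖x‖ := by
          rw [← K.starProjection_orthogonal_val]
          exact mul_le_mul_of_nonneg_left (Kᗮ.norm_starProjection_apply_le x) (hμ j le_rfl)

lemma exists_finrank_eq_mul_sq_norm_le_inner (j : Fin n) :
    ∃ S : Submodule ℝ E, finrank ℝ S = j + 1 ∧
      ∀ x ∈ S, hT.eigenvalues hn j * ‖x‖ ^ 2 ≤ inner ℝ (T x) x := by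
  set b := hT.eigenvectorBasis hn
  refine ⟨Submodule.span ℝ (Set.range (b ∘ Fin.castLE j.2)), ?_, fun x hx => ?_⟩
  · rw [finrank_span_eq_card ((b.orthonormal.comp _ (Fin.castLE_injective _)).linearIndependent),
      Fintype.card_fin]
  have hc : ∀ i, j < i → b.repr x i = 0 := fun i hi => by
    rw [b.repr_apply_apply]
    refine (Submodule.span_le (p := LinearMap.ker (innerₛₗ ℝ (b i))).mpr ?_ hx :)
    rintro _ ⟨r, rfl⟩
    exact b.orthonormal.2 (Fin.ne_of_val_ne (by simp only [Fin.val_castLE]; omega))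
  rw [hT.inner_apply_self_eq_sum hn, ← b.repr.norm_map, EuclideanSpace.norm_sq_eq,
    Finset.mul_sum]
  refine Finset.sum_le_sum fun i _ => ?_
  rcases le_or_gt i j with hij | hji
  · rw [Real.norm_eq_abs, sq_abs]
    exact mul_le_mul_of_nonneg_right (hT.eigenvalues_antitone hn hij) (sq_nonneg _)
  · rw [hc i hji]
    simp

end LinearMap.IsSymmetric

section SingVal

variable {a b c : ℕ}

lemma singVal_le_norm_sub (M D : Matrix (Fin a) (Fin b) ℝ) {j : ℕ} (hD : D.rank < j) :
    singVal M j ≤ ‖M - D‖ :=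
  csInf_le ⟨0, by rintro r ⟨D, -, rfl⟩; exact norm_nonneg _⟩ ⟨D, hD, rfl⟩

lemma le_singVal {M : Matrix (Fin a) (Fin b) ℝ} {j : ℕ} (hj : 0 < j) {r : ℝ}
    (h : ∀ D : Matrix (Fin a) (Fin b) ℝ, D.rank < j → r ≤ ‖M - D‖) : r ≤ singVal M j :=
  le_csInf ⟨_, 0, by simpa using hj, rfl⟩ (by rintro _ ⟨D, hD, rfl⟩; exact h D hD)

lemma singVal_add_le (X E : Matrix (Fin a) (Fin b) ℝ) {j : ℕ} (hj : 0 < j) :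
    singVal (X + E) j ≤ singVal X j + ‖E‖ := by
  rw [← sub_le_iff_le_add]
  refine le_singVal hj fun D hD => sub_le_iff_le_add.mpr ?_
  calc singVal (X + E) j ≤ ‖X + E - D‖ := singVal_le_norm_sub _ _ hD
    _ = ‖(X - D) + E‖ := by rw [add_sub_right_comm]
    _ ≤ ‖X - D‖ + ‖E‖ := norm_add_le _ _

lemma singVal_mul_le {J : Matrix (Fin c) (Fin a) ℝ} (hJ : ‖J‖ ≤ 1)
    (G : Matrix (Fin a) (Fin b) ℝ) {j : ℕ} (hj : 0 < j) : singVal (J * G) j ≤ singVal G j :=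
  le_singVal hj fun D hD => calc
    singVal (J * G) j ≤ ‖J * G - J * D‖ :=
      singVal_le_norm_sub _ _ ((rank_mul_le_right J D).trans_lt hD)
    _ = ‖J * (G - D)‖ := by rw [Matrix.mul_sub]
    _ ≤ ‖J‖ * ‖G - D‖ := l2_opNorm_mul _ _
    _ ≤ ‖G - D‖ := mul_le_of_le_one_left (norm_nonneg _) hJ

lemma singVal_le_of_norm_sub_apply_le (M : Matrix (Fin a) (Fin b) ℝ)
    (T : EuclideanSpace ℝ (Fin b) →ₗ[ℝ] EuclideanSpace ℝ (Fin a)) {j : ℕ}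
    (hT : finrank ℝ (LinearMap.range T) < j) {C : ℝ} (hC : 0 ≤ C)
    (h : ∀ x, ‖toEuclideanLin M x - T x‖ ≤ C * ‖x‖) : singVal M j ≤ C := by
  have hD : (toEuclideanLin.symm T).rank < j := by
    rwa [rank_eq_finrank_range_toEuclideanLin, LinearEquiv.apply_symm_apply]
  refine (singVal_le_norm_sub M _ hD).trans ?_
  rw [l2_opNorm_def]
  refine ContinuousLinearMap.opNorm_le_bound _ hC fun x => ?_
  simpa using h x

lemma le_singVal_of_le_norm_apply (M : Matrix (Fin a) (Fin b) ℝ)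
    (S : Submodule ℝ (EuclideanSpace ℝ (Fin b))) {j : ℕ} (hj : 0 < j)
    (hS : j ≤ finrank ℝ S) {r : ℝ} (h : ∀ x ∈ S, r * ‖x‖ ≤ ‖toEuclideanLin M x‖) :
    r ≤ singVal M j := by
  refine le_singVal hj fun D hD => ?_
  obtain ⟨x, hxS, hxD, hx0⟩ : ∃ x ∈ S, x ∈ LinearMap.ker (toEuclideanLin D) ∧ x ≠ 0 := by
    by_contra! hdisj
    have := Submodule.finrank_add_finrank_le_of_disjoint (Submodule.disjoint_def.mpr hdisj)
    have := LinearMap.finrank_range_add_finrank_ker (toEuclideanLin D)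
    rw [← rank_eq_finrank_range_toEuclideanLin] at this
    simp only [finrank_euclideanSpace_fin] at *
    omega
  refine le_of_mul_le_mul_right ?_ (norm_pos_iff.mpr hx0)
  calc r * ‖x‖ ≤ ‖toEuclideanLin M x‖ := h x hxS
    _ = ‖toEuclideanLin (M - D) x‖ := by simp [LinearMap.mem_ker.mp hxD]
    _ ≤ ‖M - D‖ * ‖x‖ := (M - D).l2_opNorm_toEuclideanLin_apply_le x

end SingVal

lemma singVal_transpose_mul_self_le_sq {a b : ℕ} (B : Matrix (Fin a) (Fin b) ℝ) (j : Fin b) :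
    singVal (Bᵀ * B) (j + 1) ≤ singVal B (j + 1) ^ 2 := by
  have hG : (toEuclideanLin (Bᵀ * B)).IsPositive := by
    rw [isPositive_toEuclideanLin_iff, ← conjTranspose_eq_transpose_of_trivial]
    exact posSemidef_conjTranspose_mul_self B
  have hn := finrank_euclideanSpace_fin (𝕜 := ℝ) (n := b)
  set μ := hG.isSymmetric.eigenvalues hn
  have hμ : 0 ≤ μ j := hG.nonneg_eigenvalues hn j
  have hupper : singVal (Bᵀ * B) (j + 1) ≤ μ j := by
    obtain ⟨T, hT, hTG⟩ := hG.isSymmetric.exists_finrank_range_le_norm_sub_apply_le hn j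
      fun i _ => hG.nonneg_eigenvalues hn i
    exact singVal_le_of_norm_sub_apply_le _ T (Nat.lt_succ_of_le hT) hμ hTG
  have hlower : √(μ j) ≤ singVal B (j + 1) := by
    obtain ⟨S, hS, hSG⟩ := hG.isSymmetric.exists_finrank_eq_mul_sq_norm_le_inner hn j
    refine le_singVal_of_le_norm_apply B S j.succ_pos hS.ge fun x hx => ?_
    have := hSG x hx
    rw [inner_toEuclideanLin_transpose_mul_self] at this
    rw [← Real.sqrt_sq (norm_nonneg (toEuclideanLin B x)), ← Real.sqrt_sq (norm_nonneg x),
      ← Real.sqrt_mul hμ]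
    exact Real.sqrt_le_sqrt (by simpa [μ, mul_pow] using this)
  calc singVal (Bᵀ * B) (j + 1) ≤ μ j := hupper
    _ = √(μ j) ^ 2 := (Real.sq_sqrt hμ).symm
    _ ≤ singVal B (j + 1) ^ 2 := pow_le_pow_left₀ (Real.sqrt_nonneg _) hlower 2

lemma eq_submatrix_one_mul_add_single {k : ℕ} {G : Matrix (Fin k) (Fin k) ℝ}
    {M : Matrix (Fin (k + 1)) (Fin k) ℝ} {j₀ : Fin k} {c : ℝ}
    (hM : ∀ i j, M i j = if h : (i : ℕ) < k then G ⟨i, h⟩ j else if (j : ℕ) = j₀ then c else 0) :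
    M = (1 : Matrix (Fin (k + 1)) (Fin (k + 1)) ℝ).submatrix id Fin.castSucc * G +
      single (Fin.last k) j₀ c := by
  ext i j
  induction i using Fin.lastCases with
  | last => simp [hM, mul_apply, one_apply, single_apply, Fin.val_inj, eq_comm (a := j₀),
      eq_comm (a := Fin.last k), Fin.castSucc_ne_last]
  | cast i => simp [hM, mul_apply, one_apply, eq_comm (a := Fin.last k),
      Fin.castSucc_ne_last]

lemma singVal_le_sq_add_abs_of_eq_stack {a k : ℕ} (B : Matrix (Fin a) (Fin k) ℝ)
    {M : Matrix (Fin (k + 1)) (Fin k) ℝ} {j₀ : Fin k} {c : ℝ}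
    (hM : ∀ i j, M i j =
      if h : (i : ℕ) < k then (Bᵀ * B) ⟨i, h⟩ j else if (j : ℕ) = j₀ then c else 0)
    (i : Fin k) : singVal M (i + 1) ≤ singVal B (i + 1) ^ 2 + |c| := by
  have hJ := l2_opNorm_le_one_of_transpose_mul_self
    (transpose_mul_self_submatrix_one (R := ℝ) (Fin.castSucc_injective k))
  calc singVal M (i + 1)
      ≤ singVal ((1 : Matrix (Fin (k + 1)) (Fin (k + 1)) ℝ).submatrix id Fin.castSucc * (Bᵀ * B))
          (i + 1) + ‖single (Fin.last k) j₀ c‖ := by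
        rw [eq_submatrix_one_mul_add_single hM]
        exact singVal_add_le _ _ i.succ_pos
    _ ≤ singVal (Bᵀ * B) (i + 1) + |c| := by
        rw [l2_opNorm_single]
        gcongr
        exact singVal_mul_le hJ _ i.succ_pos
    _ ≤ singVal B (i + 1) ^ 2 + |c| := by
        gcongr
        exact singVal_transpose_mul_self_le_sq B i

lemma abs_mul_lt_mul_of_sq_add_sq_le {x y u s t : ℝ} (hu : u ≠ 0) (hy : y ≠ 0)
    (hs : x ^ 2 + u ^ 2 ≤ s ^ 2) (ht : y ^ 2 ≤ t ^ 2) (hs₀ : 0 ≤ s) (ht₀ : 0 ≤ t) :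
    |x * y| < s * t := by
  have hx : |x| < s := abs_lt_of_sq_lt_sq (by linarith [sq_pos_of_ne_zero hu]) hs₀
  rw [abs_mul]
  calc |x| * |y| < s * |y| := mul_lt_mul_of_pos_right hx (abs_pos.mpr hy)
    _ ≤ s * t := mul_le_mul_of_nonneg_left (abs_le_of_sq_le_sq ht ht₀) hs₀

lemma sum_sq_apply_le_sq_norm_mul_one_sub {m n p : ℕ} {A : Matrix (Fin m) (Fin n) ℝ}
    {P : Matrix (Fin m) (Fin p) ℝ} (hP : Pᵀ * P = 1) {Q : Matrix (Fin n) (Fin n) ℝ}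
    (hQ : Qᵀ * Q = 1) {B : Matrix (Fin p) (Fin n) ℝ} (hA : A = P * B * Qᵀ) {k : ℕ}
    (hk : k ≤ n) {j : Fin n} (hkj : k ≤ j) :
    ∑ i, B i j ^ 2 ≤ ‖A * (1 - colSub Q k hk * (colSub Q k hk)ᵀ)‖ ^ 2 := by
  set W := A * (1 - colSub Q k hk * (colSub Q k hk)ᵀ)
  have hproj : ∀ r, ((colSub Q k hk)ᵀ * Q) r j = 0 := fun r => by
    have := congrFun (congrFun hQ ⟨r, r.2.trans_le hk⟩) j
    simp only [colSub, mul_apply, transpose_apply, submatrix_apply, id] at this ⊢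
    rw [this, one_apply_ne]
    intro h
    have := congrArg Fin.val h
    simp only at this
    omega
  have hAQ : A * Q = P * B := by rw [hA, Matrix.mul_assoc, hQ, Matrix.mul_one]
  have hcol : ∀ i, (W * Q) i j = (P * B) i j := fun i => by
    rw [show W * Q = A * Q - A * colSub Q k hk * ((colSub Q k hk)ᵀ * Q) by
      simp only [W, Matrix.sub_mul, Matrix.mul_sub, Matrix.mul_one, Matrix.mul_assoc],
      Matrix.sub_apply, hAQ, mul_apply (M := A * colSub Q k hk)]
    simp [hproj]
  calc ∑ i, B i j ^ 2 = ∑ i, (W * Q) i j ^ 2 := by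
        simp_rw [hcol, Matrix.sum_sq_mul_apply_of_transpose_mul_self hP]
    _ ≤ ‖W * Q‖ ^ 2 := sum_sq_apply_le_l2_opNorm_sq _ _
    _ ≤ ‖W‖ ^ 2 := by
        gcongr
        exact (l2_opNorm_mul W Q).trans
          (mul_le_of_le_one_right (norm_nonneg W) (l2_opNorm_le_one_of_transpose_mul_self hQ))

/-- `(θ̃_i^{(k)})² < (θ_i^{(k)})² + γ_k^{lsqr} γ_{k-1}^{lsqr}`, where
`(θ̃_i^{(k)})²` are the singular values of `M_k = (B_kᵀB_k; α_{k+1}β_{k+1}(e_k)ᵀ)`. -/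
theorem lsmr_singularValues_squared_upper_bound
    (m n : ℕ)
    (A : Matrix (Fin m) (Fin n) ℝ)
    (P : Matrix (Fin m) (Fin (n + 1)) ℝ) (hP : Pᵀ * P = 1)
    (Q : Matrix (Fin n) (Fin n) ℝ) (hQ : Qᵀ * Q = 1)
    (α : Fin n → ℝ)
    (β : Fin n → ℝ) (hβ : ∀ i, 0 < β i)
    (B : Matrix (Fin (n + 1)) (Fin n) ℝ)
    (hB : ∀ (i : Fin (n + 1)) (j : Fin n),
      B i j = if (i : ℕ) = (j : ℕ) then α j
        else if (i : ℕ) = (j : ℕ) + 1 then β j else 0)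
    (hA : A = P * B * Qᵀ)
    (k : ℕ) (hk1 : 1 ≤ k) (hk2 : k ≤ n - 1)
    (Mk : Matrix (Fin (k + 1)) (Fin k) ℝ)
    (hMk : ∀ (i : Fin (k + 1)) (j : Fin k),
      Mk i j = if h : (i : ℕ) < k then
          ((subUL B (k + 1) k (by omega) (by omega))ᵀ *
            subUL B (k + 1) k (by omega) (by omega)) ⟨(i : ℕ), h⟩ j
        else if (j : ℕ) = k - 1 then
          B ⟨k, by omega⟩ ⟨k, by omega⟩ * B ⟨k, by omega⟩ ⟨k - 1, by omega⟩
        else 0)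
    :
    ∀ i : Fin k,
      singVal Mk ((i : ℕ) + 1) <
        singVal (subUL B (k + 1) k (by omega) (by omega)) ((i : ℕ) + 1) ^ 2 +
          specNorm (A * (1 - colSub Q k (by omega) * (colSub Q k (by omega))ᵀ)) *
            specNorm (A * (1 - colSub Q (k - 1) (by omega) * (colSub Q (k - 1) (by omega))ᵀ)) := by
  intro i
  have hβ₁ : B ⟨k + 1, by omega⟩ ⟨k, by omega⟩ ≠ 0 := by
    rw [hB, if_neg (show ¬k + 1 = k by omega), if_pos rfl]
    exact (hβ _).ne'
  have hβ₀ : B ⟨k, by omega⟩ ⟨k - 1, by omega⟩ ≠ 0 := by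
    rw [hB, if_neg (show ¬k = k - 1 by omega), if_pos (show k = k - 1 + 1 by omega)]
    exact (hβ _).ne'
  have hγ₁ := (Finset.add_le_sum (f := fun i => B i ⟨k, by omega⟩ ^ 2) (fun _ _ => sq_nonneg _)
    (Finset.mem_univ ⟨k, by omega⟩) (Finset.mem_univ ⟨k + 1, by omega⟩)
    (Fin.ne_of_val_ne (Nat.succ_ne_self k).symm)).trans
    (sum_sq_apply_le_sq_norm_mul_one_sub hP hQ hA (j := ⟨k, by omega⟩) (by omega) le_rfl)
  have hγ₀ := (Finset.single_le_sum (f := fun i => B i ⟨k - 1, by omega⟩ ^ 2)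
    (fun _ _ => sq_nonneg _) (Finset.mem_univ ⟨k, by omega⟩)).trans
    (sum_sq_apply_le_sq_norm_mul_one_sub hP hQ hA (j := ⟨k - 1, by omega⟩) (by omega) le_rfl)
  calc singVal Mk (i + 1)
      ≤ singVal (subUL B (k + 1) k (by omega) (by omega)) (i + 1) ^ 2 +
          |B ⟨k, by omega⟩ ⟨k, by omega⟩ * B ⟨k, by omega⟩ ⟨k - 1, by omega⟩| :=
        singVal_le_sq_add_abs_of_eq_stack _ (j₀ := ⟨k - 1, by omega⟩) hMk i
    _ < _ := by
        gcongr
        exact abs_mul_lt_mul_of_sq_add_sq_le hβ₁ hβ₀ hγ₁ hγ₀ (norm_nonneg _) (norm_nonneg _)
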